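/- Let m ≥ 1, let A be an m×m complex matrix, let s₀ ∈ ℝ, and suppose max{Re λ : λ ∈ σ(A)} ≤ s₀. Then for every t ≥ 0 one has ‖exp(tA)‖ ≤ e^{s₀ t} · (1 + 2t)^{m−1} · (1 + ‖A‖)^{m−1}. -/

import Mathlib

/-!
Schur triangularization `A = U T U*` (with `U` unitary and `T` upper triangular) leaves
`‖exp (t A)‖` and `‖A‖` unchanged and puts eigenvalues of `A` on the diagonal of `T`. Each entry of
`E(t) = exp (t T)` solves `(E i j)' = T i i * E i j + ∑_{i < l ≤ j} T i l * E l j`, so variation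
of constants and downward induction on `i` give `‖E i j‖ ≤ e^{s₀ t} w_{j-i}(‖T‖ t)`, where
`w_0 = 1` and `w_k(x) = x (1 + x)^(k-1)`. These weights sum to `(1 + ‖T‖ t)^(m-1)`, which thus
bounds every row and column sum of `‖E i j‖`, hence `‖E‖` by the Schur test. Finally
`1 + ‖A‖ t ≤ (1 + 2t)(1 + ‖A‖)`.
-/

open scoped Matrix Matrix.Norms.L2Operator InnerProductSpace
open NormedSpace Finset Module

theorem Finset.sum_comp_le_sum_of_injOn {ι κ M : Type*} [AddCommMonoid M] [PartialOrder M]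
    [IsOrderedAddMonoid M] [DecidableEq κ] {s : Finset ι} {t : Finset κ} {e : ι → κ} (f : κ → M)
    (he : Set.InjOn e s) (hst : ∀ i ∈ s, e i ∈ t) (hf : ∀ k ∈ t, 0 ≤ f k) :
    ∑ i ∈ s, f (e i) ≤ ∑ k ∈ t, f k := by
  rw [← sum_image he]
  exact sum_le_sum_of_subset_of_nonneg (image_subset_iff.2 hst) fun k hk _ => hf k hk

theorem LinearMap.exists_orthonormal_inner_map_eq_zero_of_lt {V : Type*} [NormedAddCommGroup V]
    [InnerProductSpace ℂ V] [FiniteDimensional ℂ V] {n : ℕ} (hn : finrank ℂ V = n)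
    (f : V →ₗ[ℂ] V) :
    ∃ v : Fin n → V, Orthonormal ℂ v ∧ ∀ i j, i < j → ⟪v i, f (v j)⟫_ℂ = 0 := by
  induction n generalizing V with
  | zero => exact ⟨Fin.elim0, Orthonormal.of_isEmpty _, fun i => i.elim0⟩
  | succ n ih =>
    have : Nontrivial V := finrank_pos_iff (R := ℂ).mp (by omega)
    have : Fact (finrank ℂ V = n + 1) := ⟨hn⟩
    -- the orthogonal complement of an eigenvector of the adjoint is `f`-invariant
    obtain ⟨μ, hμ⟩ := End.exists_eigenvalue (LinearMap.adjoint f)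
    obtain ⟨w, hw⟩ := hμ.exists_hasEigenvector
    set u : V := (‖w‖⁻¹ : ℂ) • w
    have hu : ‖u‖ = 1 := norm_smul_inv_norm hw.2
    have hfu : LinearMap.adjoint f u = μ • u :=
      End.mem_eigenspace_iff.1 (Submodule.smul_mem _ _ hw.1)
    set W := (ℂ ∙ u)ᗮ
    have hW : ∀ x ∈ W, f x ∈ W := fun x hx => by
      rw [Submodule.mem_orthogonal_singleton_iff_inner_right] at hx ⊢
      rw [← LinearMap.adjoint_inner_left, hfu, inner_smul_left, hx, mul_zero]
    obtain ⟨c, hc, hcf⟩ := ih (Submodule.finrank_orthogonal_span_singleton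
      (ne_zero_of_norm_ne_zero (hu.symm ▸ one_ne_zero))) (f.restrict hW)
    refine ⟨Matrix.vecCons u fun i => (c i : V), ?_, fun i j hij => ?_⟩
    · exact orthonormal_vecCons_iff.2 ⟨hu, fun i =>
        Submodule.mem_orthogonal_singleton_iff_inner_right.1 (c i).2,
        hc.comp_linearIsometry W.subtypeₗᵢ⟩
    · induction j using Fin.cases with
      | zero => exact absurd hij (Fin.not_lt_zero i)
      | succ j =>
        induction i using Fin.cases with
        | zero => exact Submodule.mem_orthogonal_singleton_iff_inner_right.1 (hW _ (c j).2)
        | succ i => simpa [Submodule.coe_inner] using hcf i j (Fin.succ_lt_succ_iff.1 hij)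

namespace Matrix

theorem conjTranspose_mul_mul_apply_eq_inner {𝕜 n ι : Type*} [RCLike 𝕜] [Fintype n]
    [DecidableEq n] (w : ι → EuclideanSpace 𝕜 n) (M : Matrix n n 𝕜) (i j : ι) :
    ((of fun k l => w l k)ᴴ * M * of fun k l => w l k) i j =
      ⟪w i, toEuclideanLin M (w j)⟫_𝕜 := by
  simp only [mul_apply, conjTranspose_apply, of_apply, PiLp.inner_apply, toLpLin_apply,
    RCLike.inner_apply, RCLike.star_def, mulVec, dotProduct, sum_mul]
  rw [sum_comm]
  exact sum_congr rfl fun _ _ => sum_congr rfl fun _ _ => by ring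

theorem exists_mem_unitaryGroup_isUpperTriangular {m : ℕ} (A : Matrix (Fin m) (Fin m) ℂ) :
    ∃ U ∈ unitaryGroup (Fin m) ℂ, (star U * A * U).IsUpperTriangular := by
  obtain ⟨v, hv, hvA⟩ :=
    (toEuclideanLin A).exists_orthonormal_inner_map_eq_zero_of_lt finrank_euclideanSpace_fin
  -- `v` makes `A` lower triangular; reversing its order makes it upper triangular
  set w := v ∘ Fin.rev
  have hw : Orthonormal ℂ w := hv.comp _ Fin.rev_injective
  refine ⟨of fun k l => w l k, ?_, fun i j hij => ?_⟩
  · rw [mem_unitaryGroup_iff', star_eq_conjTranspose, ← Matrix.mul_one (conjTranspose _)]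
    ext i j
    rw [conjTranspose_mul_mul_apply_eq_inner, toLpLin_one, LinearMap.id_apply]
    exact orthonormal_iff_ite.1 hw i j
  · rw [star_eq_conjTranspose, conjTranspose_mul_mul_apply_eq_inner]
    exact hvA _ _ (Fin.rev_lt_rev.2 hij)

theorem IsUpperTriangular.diag_mem_spectrum {R n : Type*} [CommRing R] [Nontrivial R] [Fintype n]
    [DecidableEq n] [LinearOrder n] {M : Matrix n n R} (hM : M.IsUpperTriangular) (i : n) :
    M i i ∈ spectrum R M := by
  refine mem_spectrum_of_isRoot_charpoly ?_
  rw [charpoly_of_isUpperTriangular M hM, Polynomial.IsRoot, Polynomial.eval_prod]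
  exact prod_eq_zero (mem_univ i) (by simp)

section L2OpNorm

variable {𝕜 m n : Type*} [RCLike 𝕜] [Fintype m] [Fintype n] [DecidableEq n]

theorem norm_apply_le_l2_opNorm (A : Matrix m n 𝕜) (i : m) (j : n) : ‖A i j‖ ≤ ‖A‖ := by
  simpa using (PiLp.norm_apply_le _ i).trans (A.l2_opNorm_mulVec (EuclideanSpace.single j 1))

/-- **Schur test**. -/
theorem l2_opNorm_le_of_sum_norm_le (A : Matrix m n 𝕜) {c : ℝ} (hc : 0 ≤ c)
    (hrow : ∀ i, ∑ j, ‖A i j‖ ≤ c) (hcol : ∀ j, ∑ i, ‖A i j‖ ≤ c) : ‖A‖ ≤ c := by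
  rw [l2_opNorm_def]
  refine ContinuousLinearMap.opNorm_le_bound _ hc fun x => ?_
  have hrow_sq (i : m) : ‖(A *ᵥ x.ofLp) i‖ ^ 2 ≤ c * ∑ j, ‖A i j‖ * ‖x j‖ ^ 2 := by
    calc ‖(A *ᵥ x.ofLp) i‖ ^ 2 ≤ (∑ j, ‖A i j‖ * ‖x j‖) ^ 2 := by
          gcongr
          simpa [mulVec, dotProduct] using norm_sum_le univ fun j => A i j * x j
      _ ≤ (∑ j, ‖A i j‖) * ∑ j, ‖A i j‖ * ‖x j‖ ^ 2 :=
          sum_sq_le_sum_mul_sum_of_sq_le_mul _ (fun _ _ => norm_nonneg _)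
            (fun _ _ => by positivity) fun j _ => le_of_eq (by ring)
      _ ≤ c * ∑ j, ‖A i j‖ * ‖x j‖ ^ 2 := by gcongr; exact hrow i
  rw [← abs_of_nonneg (norm_nonneg _), ← abs_of_nonneg (by positivity : 0 ≤ c * ‖x‖), ← sq_le_sq,
    EuclideanSpace.norm_sq_eq, mul_pow, EuclideanSpace.norm_sq_eq]
  calc ∑ i, ‖(A *ᵥ x.ofLp) i‖ ^ 2 ≤ ∑ i, c * ∑ j, ‖A i j‖ * ‖x j‖ ^ 2 :=
        sum_le_sum fun i _ => hrow_sq i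
    _ = c * ∑ j, (∑ i, ‖A i j‖) * ‖x j‖ ^ 2 := by
        rw [← mul_sum, sum_comm]; simp_rw [sum_mul]
    _ ≤ c * ∑ j, c * ‖x j‖ ^ 2 := by gcongr with j; exact hcol j
    _ = c ^ 2 * ∑ j, ‖x j‖ ^ 2 := by rw [← mul_sum, ← mul_assoc, sq]

end L2OpNorm

theorem IsUpperTriangular.l2_opNorm_le_sum_range {m : ℕ} {E : Matrix (Fin m) (Fin m) ℂ}
    (hE : E.IsUpperTriangular) {f : ℕ → ℝ} (hf : ∀ k, 0 ≤ f k)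
    (hEf : ∀ i j, i ≤ j → ‖E i j‖ ≤ f (j - i)) : ‖E‖ ≤ ∑ k ∈ range m, f k := by
  have hzero {i j : Fin m} (h : ¬i ≤ j) : ‖E i j‖ = 0 := by rw [hE (not_le.1 h), norm_zero]
  refine l2_opNorm_le_of_sum_norm_le _ (sum_nonneg fun k _ => hf k) (fun i => ?_) fun j => ?_
  · calc ∑ j, ‖E i j‖ = ∑ j ∈ Ici i, ‖E i j‖ :=
          (sum_subset (subset_univ _) fun j _ hj => hzero (mt mem_Ici.2 hj)).symm
      _ ≤ ∑ j ∈ Ici i, f (j - i) := sum_le_sum fun j hj => hEf i j (mem_Ici.1 hj)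
      _ ≤ ∑ k ∈ range m, f k :=
          sum_comp_le_sum_of_injOn _
            (fun a ha b hb _ => by simp only [coe_Ici, Set.mem_Ici] at ha hb; omega)
            (fun j _ => mem_range.2 (by omega)) fun k _ => hf k
  · calc ∑ i, ‖E i j‖ = ∑ i ∈ Iic j, ‖E i j‖ :=
          (sum_subset (subset_univ _) fun i _ hi => hzero (mt mem_Iic.2 hi)).symm
      _ ≤ ∑ i ∈ Iic j, f (j - i) := sum_le_sum fun i hi => hEf i j (mem_Iic.1 hi)
      _ ≤ ∑ k ∈ range m, f k :=
          sum_comp_le_sum_of_injOn _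
            (fun a ha b hb _ => by simp only [coe_Iic, Set.mem_Iic] at ha hb; omega)
            (fun i _ => mem_range.2 (by omega)) fun k _ => hf k

end Matrix

theorem Complex.norm_le_of_hasDerivAt_eq_mul_add {u R : ℝ → ℂ} {c : ℂ} {s₀ g t : ℝ}
    (ht : 0 ≤ t) (hc : c.re ≤ s₀) (hu : ∀ r ∈ Set.Icc 0 t, HasDerivAt u (c * u r + R r) r)
    (hR : ∀ r ∈ Set.Icc 0 t, ‖R r‖ ≤ Real.exp (s₀ * r) * g) :
    ‖u t‖ ≤ Real.exp (s₀ * t) * (‖u 0‖ + g * t) := by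
  have hg : 0 ≤ g := by simpa using (norm_nonneg _).trans (hR 0 ⟨le_rfl, ht⟩)
  have hnorm (r : ℝ) (z : ℂ) : ‖exp (r * z)‖ = Real.exp (r * z.re) := by
    rw [norm_exp, re_ofReal_mul]
  have hw : ∀ r ∈ Set.Icc 0 t, HasDerivWithinAt (fun r : ℝ => exp (r * -c) * u r)
      (exp (r * -c) * R r) (Set.Icc 0 t) r := fun r hr => by
    have hexp : HasDerivAt (fun r : ℝ => exp (r * -c)) (exp (r * -c) * -c) r := by
      simpa using ((hasDerivAt_id (r : ℂ)).comp_ofReal.mul_const (-c)).cexp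
    exact (hexp.mul (hu r hr)).hasDerivWithinAt.congr_deriv (by ring)
  have hw_bound : ∀ r ∈ Set.Ico 0 t, ‖exp (r * -c) * R r‖ ≤ Real.exp ((s₀ - c.re) * t) * g :=
    fun r hr => by
      rw [norm_mul, hnorm]
      calc Real.exp (r * (-c).re) * ‖R r‖
          ≤ Real.exp (r * (-c).re) * (Real.exp (s₀ * r) * g) := by
            gcongr; exact hR r (Set.Ico_subset_Icc_self hr)
        _ = Real.exp ((s₀ - c.re) * r) * g := by
            rw [← mul_assoc, ← Real.exp_add, neg_re]; ring_nf
        _ ≤ Real.exp ((s₀ - c.re) * t) * g := by gcongr; exact hr.2.le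
  have hmvt := norm_image_sub_le_of_norm_deriv_le_segment' hw hw_bound t ⟨ht, le_rfl⟩
  rw [ofReal_zero, zero_mul, exp_zero, one_mul, sub_zero] at hmvt
  have hut : u t = exp (t * c) * (exp (t * -c) * u t) := by
    rw [← mul_assoc, ← exp_add, mul_neg, add_neg_cancel, exp_zero, one_mul]
  calc ‖u t‖ = Real.exp (t * c.re) * ‖exp (t * -c) * u t‖ := by
        rw [congrArg norm hut, norm_mul, hnorm]
    _ ≤ Real.exp (t * c.re) * (‖u 0‖ + Real.exp ((s₀ - c.re) * t) * g * t) := by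
        gcongr
        linarith [norm_le_norm_add_norm_sub' (exp (t * -c) * u t) (u 0)]
    _ = Real.exp (t * c.re) * ‖u 0‖ + Real.exp (s₀ * t) * g * t := by
        rw [mul_add, ← mul_assoc, ← mul_assoc, ← Real.exp_add]; ring_nf
    _ ≤ Real.exp (s₀ * t) * (‖u 0‖ + g * t) := by
        have hexp : Real.exp (t * c.re) ≤ Real.exp (s₀ * t) := Real.exp_le_exp.2 (by nlinarith)
        linarith [mul_le_mul_of_nonneg_right hexp (norm_nonneg (u 0))]

def expEntryWeight (x : ℝ) : ℕ → ℝ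
  | 0 => 1
  | k + 1 => x * (1 + x) ^ k

section expEntryWeight

variable {x y : ℝ}

theorem expEntryWeight_nonneg (hx : 0 ≤ x) : ∀ k, 0 ≤ expEntryWeight x k
  | 0 => zero_le_one
  | k + 1 => show 0 ≤ x * (1 + x) ^ k by positivity

theorem expEntryWeight_mono (hx : 0 ≤ x) (hxy : x ≤ y) :
    ∀ k, expEntryWeight x k ≤ expEntryWeight y k
  | 0 => le_rfl
  | k + 1 => show x * (1 + x) ^ k ≤ y * (1 + y) ^ k by gcongr; linarith

theorem sum_range_succ_expEntryWeight (x : ℝ) (n : ℕ) :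
    ∑ k ∈ range (n + 1), expEntryWeight x k = (1 + x) ^ n := by
  induction n with
  | zero => simp [expEntryWeight]
  | succ n ih => rw [sum_range_succ, ih, expEntryWeight]; ring

theorem sum_range_expEntryWeight_le (x : ℝ) (m : ℕ) :
    ∑ k ∈ range m, expEntryWeight x k ≤ (1 + x) ^ (m - 1) := by
  cases m with
  | zero => simp
  | succ n => exact (sum_range_succ_expEntryWeight x n).le

theorem expEntryWeight_eq (x : ℝ) (k : ℕ) :
    expEntryWeight x k = (if k = 0 then 1 else 0) + x * ∑ n ∈ range k, expEntryWeight x n := by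
  cases k with
  | zero => simp [expEntryWeight]
  | succ k => rw [sum_range_succ_expEntryWeight]; simp [expEntryWeight]

end expEntryWeight

namespace Matrix

theorem hasDerivAt_exp_smul_apply {n : Type*} [Fintype n] [DecidableEq n] (T : Matrix n n ℂ)
    (i j : n) (s : ℝ) :
    HasDerivAt (fun s : ℝ => exp (s • T) i j) ((T * exp (s • T)) i j) s :=
  ((ContinuousLinearMap.proj (R := ℝ) j).comp
    (ContinuousLinearMap.proj (R := ℝ) (φ := fun _ : n => n → ℂ) i)).hasFDerivAt.comp_hasDerivAt s
    (hasDerivAt_exp_smul_const' T s)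

theorem IsUpperTriangular.smul {S R n : Type*} [Zero R] [SMulZeroClass S R] [LT n]
    {M : Matrix n n R} (hM : M.IsUpperTriangular) (r : S) : (r • M).IsUpperTriangular :=
  fun i j h => by simp [hM h]

theorem IsUpperTriangular.mul_apply_eq_sum_Icc {R n : Type*} [NonUnitalNonAssocSemiring R]
    [Fintype n] [LinearOrder n] [LocallyFiniteOrder n] {A B : Matrix n n R}
    (hA : A.IsUpperTriangular) (hB : B.IsUpperTriangular) (i j : n) :
    (A * B) i j = ∑ l ∈ Icc i j, A i l * B l j := by
  rw [mul_apply]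
  refine (sum_subset (subset_univ _) fun l _ hl => ?_).symm
  simp only [mem_Icc, not_and_or, not_le] at hl
  rcases hl with h | h
  · rw [hA h, zero_mul]
  · rw [hB h, mul_zero]

section Triangular

variable {m : ℕ} {T : Matrix (Fin m) (Fin m) ℂ} {s₀ : ℝ}

theorem IsUpperTriangular.norm_exp_smul_apply_le (hT : T.IsUpperTriangular)
    (hdiag : ∀ i, (T i i).re ≤ s₀) {K : ℝ} (hK : ∀ i j, ‖T i j‖ ≤ K) {i j : Fin m} (hij : i ≤ j)
    {t : ℝ} (ht : 0 ≤ t) :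
    ‖exp (t • T) i j‖ ≤ Real.exp (s₀ * t) * expEntryWeight (K * t) (j - i) := by
  induction i using WellFoundedGT.induction generalizing t with
  | _ i ih =>
  have hK0 : 0 ≤ K := (norm_nonneg _).trans (hK i i)
  have hsplit (r : ℝ) : (T * exp (r • T)) i j =
      T i i * exp (r • T) i j + ∑ l ∈ Ioc i j, T i l * exp (r • T) l j := by
    rw [hT.mul_apply_eq_sum_Icc (hT.smul r).exp, Icc_eq_cons_Ioc hij, sum_cons]
  have hR : ∀ r ∈ Set.Icc 0 t, ‖∑ l ∈ Ioc i j, T i l * exp (r • T) l j‖ ≤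
      Real.exp (s₀ * r) * (K * ∑ k ∈ range (j - i), expEntryWeight (K * t) k) := by
    intro r hr
    calc ‖∑ l ∈ Ioc i j, T i l * exp (r • T) l j‖
        ≤ ∑ l ∈ Ioc i j, K * (Real.exp (s₀ * r) * expEntryWeight (K * t) (j - l)) := by
          refine (norm_sum_le _ _).trans (sum_le_sum fun l hl => ?_)
          have hl := mem_Ioc.1 hl
          rw [norm_mul]
          gcongr
          · exact hK i l
          · refine (ih l hl.1 hl.2 hr.1).trans ?_
            gcongr
            exact expEntryWeight_mono (mul_nonneg hK0 hr.1) (by gcongr; exact hr.2) _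
      _ = Real.exp (s₀ * r) * (K * ∑ l ∈ Ioc i j, expEntryWeight (K * t) (j - l)) := by
          rw [mul_sum, mul_sum]; exact sum_congr rfl fun _ _ => by ring
      _ ≤ _ := by
          gcongr
          exact sum_comp_le_sum_of_injOn _
            (fun a ha b hb _ => by simp only [coe_Ioc, Set.mem_Ioc] at ha hb; omega)
            (fun l hl => mem_range.2 (by rw [mem_Ioc] at hl; omega))
            fun k _ => expEntryWeight_nonneg (by positivity) k
  refine (Complex.norm_le_of_hasDerivAt_eq_mul_add ht (hdiag i)
    (fun r _ => hsplit r ▸ hasDerivAt_exp_smul_apply T i j r) hR).trans_eq ?_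
  have h0 : ‖exp ((0 : ℝ) • T) i j‖ = if (j : ℕ) - i = 0 then 1 else 0 := by
    have : i = j ↔ (j : ℕ) - i = 0 := by omega
    simp only [zero_smul, exp_zero, one_apply, this]
    split_ifs <;> simp
  rw [expEntryWeight_eq, h0]
  ring

theorem IsUpperTriangular.norm_exp_smul_le (hT : T.IsUpperTriangular)
    (hdiag : ∀ i, (T i i).re ≤ s₀) {t : ℝ} (ht : 0 ≤ t) :
    ‖exp (t • T)‖ ≤ Real.exp (s₀ * t) * (1 + ‖T‖ * t) ^ (m - 1) := by
  have hx : 0 ≤ ‖T‖ * t := mul_nonneg (norm_nonneg T) ht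
  refine (IsUpperTriangular.l2_opNorm_le_sum_range (hT.smul t).exp
    (f := fun k => Real.exp (s₀ * t) * expEntryWeight (‖T‖ * t) k)
    (fun k => mul_nonneg (Real.exp_pos _).le (expEntryWeight_nonneg hx k))
    fun i j hij => hT.norm_exp_smul_apply_le hdiag (norm_apply_le_l2_opNorm T) hij ht).trans ?_
  rw [← mul_sum]
  gcongr
  exact sum_range_expEntryWeight_le _ m

end Triangular

end Matrix

theorem norm_exp_le_of_spectrum_re_le_general (m : ℕ)
    (A : Matrix (Fin m) (Fin m) ℂ) (s₀ : ℝ)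
    (hs : ∀ l ∈ spectrum ℂ A, l.re ≤ s₀) :
    ∀ t : ℝ, 0 ≤ t →
      ‖NormedSpace.exp (t • A)‖ ≤
        Real.exp (s₀ * t) * (1 + 2 * t) ^ (m - 1) * (1 + ‖A‖) ^ (m - 1) := by
  intro t ht
  obtain ⟨U, hU, hT⟩ := Matrix.exists_mem_unitaryGroup_isUpperTriangular A
  set T := star U * A * U
  have hnorm (X : Matrix (Fin m) (Fin m) ℂ) : ‖star U * X * U‖ = ‖X‖ := by
    rw [CStarRing.norm_mul_mem_unitary _ hU, CStarRing.norm_mem_unitary_mul _ (Unitary.star_mem hU)]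
  have hUinv : U⁻¹ = star U := Matrix.inv_eq_left_inv (Unitary.star_mul_self_of_mem hU)
  have hexp : exp (t • T) = star U * exp (t • A) * U := by
    rw [← hUinv, ← Matrix.exp_conj' _ _ (Unitary.isUnit_coe (U := ⟨U, hU⟩)),
      Matrix.mul_smul, Matrix.smul_mul, hUinv]
  have hdiag (i : Fin m) : (T i i).re ≤ s₀ :=
    hs _ (Unitary.spectrum_star_left_conjugate (R := ℂ) (U := ⟨U, hU⟩) ▸ hT.diag_mem_spectrum i)
  calc ‖exp (t • A)‖ = ‖exp (t • T)‖ := by rw [hexp, hnorm]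
    _ ≤ Real.exp (s₀ * t) * (1 + ‖A‖ * t) ^ (m - 1) := hnorm A ▸ hT.norm_exp_smul_le hdiag ht
    _ ≤ _ := by
        rw [mul_assoc, ← mul_pow]
        gcongr
        nlinarith [norm_nonneg A]

/-- If every eigenvalue `λ` of the `m × m` complex matrix `A` satisfies `Re λ ≤ s₀`, then
for every `t ≥ 0`, `‖exp(tA)‖ ≤ e^{s₀ t} (1 + 2t)^{m-1} (1 + ‖A‖)^{m-1}`
(operator norm induced by the Euclidean norm on `ℂ^m`). -/
theorem norm_exp_le_of_spectrum_re_le (m : ℕ) (hm : 1 ≤ m)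
    (A : Matrix (Fin m) (Fin m) ℂ) (s₀ : ℝ)
    (hs : ∀ l ∈ spectrum ℂ A, l.re ≤ s₀) :
    ∀ t : ℝ, 0 ≤ t →
      ‖NormedSpace.exp (t • A)‖ ≤
        Real.exp (s₀ * t) * (1 + 2 * t) ^ (m - 1) * (1 + ‖A‖) ^ (m - 1) :=
  norm_exp_le_of_spectrum_re_le_general m A s₀ hs
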